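/- In a minimum-length covering strategy for a tree, if an edge (x,y) is traversed by two different robots, then both robots traverse (x,y) in the same direction. -/

import Mathlib

open Finset

variable {V : Type*}

/-- The list of consecutive steps of a walk given as a list of vertices. -/
def wsteps (W : List V) : List (V × V) := W.zip W.tail

/-- A walk on a graph: a nonempty list of vertices in which consecutive
entries are equal or adjacent. -/
def IsWalk (G : SimpleGraph V) (W : List V) : Prop :=
  W ≠ [] ∧ ∀ p ∈ wsteps W, p.1 = p.2 ∨ G.Adj p.1 p.2

/-- The length of a walk: the number of position-changing moves. -/
def wlen [DecidableEq V] (W : List V) : ℕ :=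
  (wsteps W).countP (fun p => decide (p.1 ≠ p.2))

/-- The number of times a walk traverses the edge `{x, y}` (in either direction). -/
def trav [DecidableEq V] (W : List V) (x y : V) : ℕ :=
  (wsteps W).countP (fun p => decide ((p.1 = x ∧ p.2 = y) ∨ (p.1 = y ∧ p.2 = x)))

/-- The number of times a walk traverses the edge `(x, y)` from `x` to `y`. -/
def dirTrav [DecidableEq V] (W : List V) (x y : V) : ℕ :=
  (wsteps W).countP (fun p => decide (p.1 = x ∧ p.2 = y))

/-- A tuple of walks covers the graph: every vertex appears in some walk. -/
def Covers {k : ℕ} (S : Fin k → List V) : Prop := ∀ v : V, ∃ i, v ∈ S i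

/-- The total length of a strategy: the sum of the lengths of the walks. -/
def slen [DecidableEq V] {k : ℕ} (S : Fin k → List V) : ℕ := ∑ i, wlen (S i)

/-- A minimum-length covering strategy: a tuple of walks covering all vertices whose
total length is no larger than that of any covering strategy with the same starts. -/
def IsMinCover [DecidableEq V] (G : SimpleGraph V) {k : ℕ} (S : Fin k → List V) : Prop :=
  (∀ i, IsWalk G (S i)) ∧ Covers S ∧
    ∀ S' : Fin k → List V, (∀ i, IsWalk G (S' i)) → Covers S' →
      (∀ i, (S' i).head? = (S i).head?) → slen S ≤ slen S'

/-!
Exchange argument: if robot `i` steps from `x` to `y` and robot `j` from `y` to `x`, let `i`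
continue with the remainder of `j`'s walk after its arrival at `x`, and `j` with the remainder of
`i`'s walk after its arrival at `y`. Both spliced lists are walks with the original starting
points, together they visit every vertex the two old walks visited, and the two traversals of
the edge have disappeared, so the total length drops by two.
-/

open Function

theorem wsteps_cons_cons (a b : V) (l : List V) :
    wsteps (a :: b :: l) = (a, b) :: wsteps (b :: l) := rfl

theorem wsteps_append_cons (P : List V) (a : V) (T : List V) :
    wsteps (P ++ a :: T) = wsteps (P ++ [a]) ++ wsteps (a :: T) := by
  induction P with
  | nil => rfl
  | cons c P ih =>
    cases P with
    | nil => rfl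
    | cons d P =>
      simp only [List.cons_append, wsteps_cons_cons] at ih ⊢
      rw [ih]

theorem exists_eq_append_of_mem_wsteps {a b : V} {W : List V} (h : (a, b) ∈ wsteps W) :
    ∃ P Q, W = P ++ a :: b :: Q := by
  induction W with
  | nil => simp [wsteps] at h
  | cons c W ih =>
    cases W with
    | nil => simp [wsteps] at h
    | cons d W =>
      rcases List.mem_cons.1 (wsteps_cons_cons c d W ▸ h) with h | h
      · obtain ⟨rfl, rfl⟩ := Prod.mk.inj h
        exact ⟨[], W, rfl⟩
      · obtain ⟨P, Q, hPQ⟩ := ih h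
        exact ⟨c :: P, Q, by rw [hPQ, List.cons_append]⟩

theorem exists_eq_append_of_dirTrav_pos [DecidableEq V] {W : List V} {x y : V}
    (h : 0 < dirTrav W x y) : ∃ P Q, W = P ++ x :: y :: Q := by
  obtain ⟨⟨a, b⟩, hmem, hab⟩ := List.countP_pos_iff.1 h
  obtain ⟨rfl, rfl⟩ := of_decide_eq_true hab
  exact exists_eq_append_of_mem_wsteps hmem

theorem isWalk_append_cons_iff {G : SimpleGraph V} {P : List V} {a : V} {T : List V} :
    IsWalk G (P ++ a :: T) ↔ IsWalk G (P ++ [a]) ∧ IsWalk G (a :: T) := by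
  simp only [IsWalk, wsteps_append_cons P a T, List.mem_append, or_imp, forall_and]
  simp

theorem IsWalk.splice {G : SimpleGraph V} {P L M T : List V} {a : V}
    (h₁ : IsWalk G (P ++ a :: L)) (h₂ : IsWalk G (M ++ a :: T)) : IsWalk G (P ++ a :: T) :=
  isWalk_append_cons_iff.2
    ⟨(isWalk_append_cons_iff.1 h₁).1, (isWalk_append_cons_iff.1 h₂).2⟩

theorem head?_append_cons (P : List V) (a : V) (L L' : List V) :
    (P ++ a :: L).head? = (P ++ a :: L').head? := by
  cases P <;> rfl

section Length

variable [DecidableEq V]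

theorem wlen_append_cons (P : List V) (a : V) (T : List V) :
    wlen (P ++ a :: T) = wlen (P ++ [a]) + wlen (a :: T) := by
  rw [wlen, wlen, wlen, wsteps_append_cons P a T, List.countP_append]

theorem wlen_cons_cons_of_ne {a b : V} (h : a ≠ b) (T : List V) :
    wlen (a :: b :: T) = wlen (b :: T) + 1 := by
  simp [wlen, wsteps_cons_cons, h]

theorem wlen_exchange {x y : V} (hxy : x ≠ y) (P Q R T : List V) :
    wlen (P ++ x :: T) + wlen (R ++ y :: Q) + 2 =
      wlen (P ++ x :: y :: Q) + wlen (R ++ y :: x :: T) := by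
  rw [wlen_append_cons P x T, wlen_append_cons P x (y :: Q), wlen_append_cons R y Q,
    wlen_append_cons R y (x :: T),
    wlen_cons_cons_of_ne hxy, wlen_cons_cons_of_ne hxy.symm]
  omega

theorem slen_update_add {k : ℕ} (S : Fin k → List V) (i : Fin k) (A : List V) :
    slen (update S i A) + wlen (S i) = slen S + wlen A := by
  have hsplit (f : Fin k → ℕ) : ∑ l, f l = f i + ∑ l ∈ Finset.univ.erase i, f l :=
    (Finset.add_sum_erase _ f (Finset.mem_univ i)).symm
  rw [slen, slen, hsplit, hsplit fun l => wlen (S l), update_self,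
    Finset.sum_congr rfl fun l hl => by rw [update_of_ne (Finset.ne_of_mem_erase hl)]]
  omega

theorem IsMinCover.wlen_add_le {G : SimpleGraph V} {k : ℕ} {S : Fin k → List V}
    (hS : IsMinCover G S) {i j : Fin k} (hij : i ≠ j) {A B : List V}
    (hA : IsWalk G A) (hB : IsWalk G B)
    (hAstart : A.head? = (S i).head?) (hBstart : B.head? = (S j).head?)
    (hcov : ∀ v, v ∈ S i ∨ v ∈ S j → v ∈ A ∨ v ∈ B) :
    wlen (S i) + wlen (S j) ≤ wlen A + wlen B := by
  obtain ⟨hwalk, hcovers, hmin⟩ := hS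
  set S' := update (update S i A) j B
  have hS'i : S' i = A := by simp [S', update_of_ne hij]
  have hS'j : S' j = B := by simp [S']
  have hS'other {l : Fin k} (hli : l ≠ i) (hlj : l ≠ j) : S' l = S l := by
    simp [S', update_of_ne hli, update_of_ne hlj]
  have hle : slen S ≤ slen S' := by
    refine hmin S' (fun l => ?_) (fun v => ?_) (fun l => ?_)
    · by_cases hli : l = i
      · exact hli ▸ hS'i ▸ hA
      by_cases hlj : l = j
      · exact hlj ▸ hS'j ▸ hB
      · exact hS'other hli hlj ▸ hwalk l
    · obtain ⟨l, hl⟩ := hcovers v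
      by_cases hli : l = i
      · rcases hcov v (.inl (hli ▸ hl)) with h | h
        exacts [⟨i, hS'i ▸ h⟩, ⟨j, hS'j ▸ h⟩]
      by_cases hlj : l = j
      · rcases hcov v (.inr (hlj ▸ hl)) with h | h
        exacts [⟨i, hS'i ▸ h⟩, ⟨j, hS'j ▸ h⟩]
      · exact ⟨l, hS'other hli hlj ▸ hl⟩
    · by_cases hli : l = i
      · rw [hli, hS'i, hAstart]
      by_cases hlj : l = j
      · rw [hlj, hS'j, hBstart]
      · rw [hS'other hli hlj]
  have h₁ : slen (update S i A) + wlen (S i) = slen S + wlen A := slen_update_add S i A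
  have h₂ : slen S' + wlen (S j) = slen (update S i A) + wlen B := by
    simpa [update_of_ne hij.symm] using slen_update_add (update S i A) j B
  omega

end Length

theorem stmt9_general {V : Type*} [DecidableEq V] (G : SimpleGraph V)
    {k : ℕ} (S : Fin k → List V) (hS : IsMinCover G S)
    (x y : V) (hxy : G.Adj x y) (i j : Fin k) (hij : i ≠ j)
    (hi : 1 ≤ dirTrav (S i) x y) :
    dirTrav (S j) y x = 0 := by
  by_contra hj
  obtain ⟨P, Q, hSi⟩ := exists_eq_append_of_dirTrav_pos hi
  obtain ⟨R, T, hSj⟩ := exists_eq_append_of_dirTrav_pos (Nat.pos_of_ne_zero hj)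
  have hwi := hS.1 i
  have hwj := hS.1 j
  rw [hSi] at hwi
  rw [hSj] at hwj
  have hle := hS.wlen_add_le hij (A := P ++ x :: T) (B := R ++ y :: Q)
    (hwi.splice (M := R ++ [y]) (by simpa using hwj))
    (hwj.splice (M := P ++ [x]) (by simpa using hwi))
    (by rw [hSi, head?_append_cons]) (by rw [hSj, head?_append_cons])
    (fun v => by rw [hSi, hSj]; simp only [List.mem_append, List.mem_cons]; tauto)
  have := wlen_exchange (G.ne_of_adj hxy) P Q R T
  rw [hSi, hSj] at hle
  omega

/-- In a minimum-length covering strategy on a tree, no edge is traversed from x to y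
by one robot and from y to x by another robot. -/
theorem stmt9 {V : Type*} [Fintype V] [DecidableEq V] (G : SimpleGraph V) (hT : G.IsTree)
    {k : ℕ} (S : Fin k → List V) (hS : IsMinCover G S)
    (x y : V) (hxy : G.Adj x y) (i j : Fin k) (hij : i ≠ j)
    (hi : 1 ≤ dirTrav (S i) x y) :
    dirTrav (S j) y x = 0 :=
  stmt9_general G S hS x y hxy i j hij hi
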